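/- Let c > 0, 0 < μ ≤ π/(2c), ω_c ∈ ℝ, ε ∈ ℝ with |ω_c * ε| + μ * c ≤ π/2. Suppose t_n = n * T_s + ε_n with |ε_n| ≤ ε, and ω_c = k * (2π/T_s) for a positive integer k and T_s > 0. If x, y ∈ [-c, c] satisfy sin(ω_c * t_n + μ x) = sin(ω_c * t_n + μ y) for this sample instant, then x = y. -/

import Mathlib

/-!
Since `ωc Ts = 2πk`, the carrier phase at `tn = n Ts + εn` agrees with `ωc εn` modulo `2π`.
The bound `|ωc ε| + μ c ≤ π/2` then puts both phases `ωc εn + μ x` and `ωc εn + μ y` in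
`[-π/2, π/2]`, where `sin` is injective.
-/

open Real

lemma carrier_phase_jittered_sample {Ts : ℝ} (hTs : Ts ≠ 0) (k n : ℤ) (e : ℝ) :
    k * (2 * π / Ts) * (n * Ts + e) = k * (2 * π / Ts) * e + ((k * n : ℤ) : ℝ) * (2 * π) := by
  push_cast
  field_simp
  ring

lemma abs_mul_add_mul_le {a e ε μ z c : ℝ} (he : |e| ≤ ε) (hμ : 0 ≤ μ) (hz : |z| ≤ c) :
    |a * e + μ * z| ≤ |a * ε| + μ * c := by
  have hε : 0 ≤ ε := (abs_nonneg e).trans he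
  calc |a * e + μ * z| ≤ |a| * |e| + μ * |z| := by
        simpa only [abs_mul, abs_of_nonneg hμ] using abs_add_le (a * e) (μ * z)
    _ ≤ |a| * ε + μ * c := by gcongr
    _ = |a * ε| + μ * c := by rw [abs_mul, abs_of_nonneg hε]

lemma eq_of_sin_eq_of_abs_le {u v : ℝ} (hu : |u| ≤ π / 2) (hv : |v| ≤ π / 2)
    (h : sin u = sin v) : u = v :=
  injOn_sin ⟨(abs_le.mp hu).1, (abs_le.mp hu).2⟩ ⟨(abs_le.mp hv).1, (abs_le.mp hv).2⟩ h

theorem pm_jitter_unique_general (c μ ωc ε Ts tn εn : ℝ) (k n : ℤ)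
    (hμ : 0 < μ)
    (hbound : |ωc * ε| + μ * c ≤ Real.pi / 2)
    (htn : tn = n * Ts + εn) (hεn : |εn| ≤ ε)
    (hωc : ωc = k * (2 * Real.pi / Ts)) (hTs : 0 < Ts)
    (x y : ℝ) (hx : x ∈ Set.Icc (-c) c) (hy : y ∈ Set.Icc (-c) c)
    (h : Real.sin (ωc * tn + μ * x) = Real.sin (ωc * tn + μ * y)) : x = y := by
  have hphase : ∀ z, sin (ωc * tn + μ * z) = sin (ωc * εn + μ * z) := fun z => by
    rw [htn, hωc, carrier_phase_jittered_sample hTs.ne', add_right_comm, sin_add_int_mul_two_pi]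
  have harg : ∀ z ∈ Set.Icc (-c) c, |ωc * εn + μ * z| ≤ π / 2 := fun z hz =>
    (abs_mul_add_mul_le hεn hμ.le (abs_le.mpr hz)).trans hbound
  rw [hphase, hphase] at h
  have hμxy : ωc * εn + μ * x = ωc * εn + μ * y := eq_of_sin_eq_of_abs_le (harg x hx) (harg y hy) h
  exact mul_left_cancel₀ hμ.ne' (add_left_cancel hμxy)

theorem pm_jitter_unique (c μ ωc ε Ts tn εn : ℝ) (k n : ℤ)
    (hc : 0 < c) (hμ : 0 < μ) (hμc : μ ≤ Real.pi / (2 * c))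
    (hbound : |ωc * ε| + μ * c ≤ Real.pi / 2)
    (htn : tn = n * Ts + εn) (hεn : |εn| ≤ ε)
    (hk : 0 < k) (hωc : ωc = k * (2 * Real.pi / Ts)) (hTs : 0 < Ts)
    (x y : ℝ) (hx : x ∈ Set.Icc (-c) c) (hy : y ∈ Set.Icc (-c) c)
    (h : Real.sin (ωc * tn + μ * x) = Real.sin (ωc * tn + μ * y)) : x = y :=
  pm_jitter_unique_general c μ ωc ε Ts tn εn k n hμ hbound htn hεn hωc hTs x y hx hy h
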